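/- Let g be a Lorentzian 3×3 real symmetric matrix, g8 a positive-definite 8×8 real symmetric matrix, c, A ∈ ℝ, and set f := (1 + A·c)² − A²·|g|. If f > 0, then U_Ω(A)ᵀ · M_C(g, g8, c) · U_Ω(A) = M_C( f^(−2/3)·g, f^(1/3)·g8, (c·(1 + A·c) − A·|g|)/f ). This is the action of the timelike Ω-shift duality on the metric and 3-form when the dual background can still be described by a metric and 3-form. -/

import Mathlib

open Matrix

/-!
The shear `U_Ω(A)` only mixes the first six coordinates, where `M_C` is the Kronecker product
of `g` with the 2×2 matrix `(1/D)·[[D + c², c], [c, 1]]`, `D = det g`; conjugation therefore acts on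
that 2×2 matrix as `K ↦ [[1, 0], [A, 1]]·K·[[1, A], [0, 1]]`. On the other side, rescaling
`g ↦ t⁻²·g`, `g8 ↦ t·g8` with `t³ = f` multiplies the prefactor `|det g · det g8|^(-1/2)` by `t⁻¹`,
cancels the scaling of `g8`, and replaces the coefficients of the 2×2 matrix by
`t⁻³ + c²t³/D, ct³/D, t³/D`. Both sides then agree by three rational identities in `D, c, A`,
which hold since `D < 0` for Lorentzian `g`.
-/

/-- The (g,C)-frame generalised metric: a 14×14 matrix in 3+3+8 block form. -/
noncomputable def MC (g : Matrix (Fin 3) (Fin 3) ℝ) (g8 : Matrix (Fin 8) (Fin 8) ℝ) (c : ℝ) :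
    Matrix ((Fin 3 ⊕ Fin 3) ⊕ Fin 8) ((Fin 3 ⊕ Fin 3) ⊕ Fin 8) ℝ :=
  |g.det * g8.det| ^ (-(1 : ℝ) / 2) •
    fromBlocks
      (fromBlocks ((1 + c ^ 2 / g.det) • g) ((c / g.det) • g) ((c / g.det) • g)
        ((1 / g.det) • g))
      0 0 g8

/-- The Ω-shift duality matrix: [[1, A·1], [0, 1]] on the first 6 coordinates,
identity on the 8 transverse coordinates. -/
def UOmega (A : ℝ) : Matrix ((Fin 3 ⊕ Fin 3) ⊕ Fin 8) ((Fin 3 ⊕ Fin 3) ⊕ Fin 8) ℝ :=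
  fromBlocks (fromBlocks 1 (A • 1) 0 1) 0 0 1

/-- A 3×3 real symmetric (Hermitian) matrix is Lorentzian if it has exactly one negative
and two positive eigenvalues. -/
def Lorentzian3 (g : Matrix (Fin 3) (Fin 3) ℝ) : Prop :=
  ∃ hg : g.IsHermitian,
    {i | hg.eigenvalues i < 0}.ncard = 1 ∧ {i | 0 < hg.eigenvalues i}.ncard = 2

lemma Finset.prod_neg_of_forall_ne_pos {ι R : Type*} [Fintype ι] [DecidableEq ι] [CommRing R]
    [PartialOrder R] [IsStrictOrderedRing R] {v : ι → R}
    {a : ι} (ha : v a < 0) (hpos : ∀ i ≠ a, 0 < v i) : ∏ i, v i < 0 := by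
  rw [← Finset.mul_prod_erase _ _ (Finset.mem_univ a)]
  exact mul_neg_of_neg_of_pos ha (Finset.prod_pos fun i hi => hpos i (Finset.ne_of_mem_erase hi))

lemma Lorentzian3.det_neg {g : Matrix (Fin 3) (Fin 3) ℝ} (h : Lorentzian3 g) : g.det < 0 := by
  obtain ⟨hg, hneg, hpos⟩ := h
  set v := hg.eigenvalues
  obtain ⟨a, ha⟩ := Set.ncard_eq_one.mp hneg
  have hcover : {i | v i < 0} ∪ {i | 0 < v i} = Set.univ := by
    refine Set.eq_of_subset_of_ncard_le (Set.subset_univ _) ?_ (Set.toFinite _)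
    have hdisj : Disjoint {i | v i < 0} {i | 0 < v i} :=
      Set.disjoint_left.mpr fun i (hi : v i < 0) (hi' : 0 < v i) => lt_asymm hi hi'
    rw [Set.ncard_union_eq hdisj, hneg, hpos, Set.ncard_univ, Nat.card_fin]
  have hdet : g.det = ∏ i, v i := by simpa using hg.det_eq_prod_eigenvalues
  rw [hdet]
  refine Finset.prod_neg_of_forall_ne_pos (a := a) (ha.symm.subset rfl) fun i hi => ?_
  have := hcover.symm.subset (Set.mem_univ i)
  rw [ha] at this
  exact this.resolve_left hi

lemma fromBlocks_shear_transpose_mul_mul {n α : Type*} [Fintype n] [DecidableEq n] [CommRing α]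
    (g : Matrix n n α) (A a b d : α) :
    (fromBlocks 1 (A • 1) 0 1)ᵀ * fromBlocks (a • g) (b • g) (b • g) (d • g) *
        fromBlocks 1 (A • 1) 0 1 =
      fromBlocks (a • g) ((a * A + b) • g) ((a * A + b) • g) ((a * A ^ 2 + 2 * A * b + d) • g) := by
  simp only [fromBlocks_transpose, transpose_one, transpose_zero, transpose_smul,
    fromBlocks_multiply, Matrix.one_mul, Matrix.mul_one, Matrix.zero_mul, Matrix.mul_zero,
    Matrix.smul_mul, Matrix.mul_smul, smul_zero, add_zero, smul_smul, ← add_smul]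
  congr 2 <;> ring

lemma transpose_UOmega_mul_MC_mul_UOmega (g : Matrix (Fin 3) (Fin 3) ℝ)
    (g8 : Matrix (Fin 8) (Fin 8) ℝ) (c A : ℝ) :
    (UOmega A)ᵀ * MC g g8 c * UOmega A =
      |g.det * g8.det| ^ (-(1 : ℝ) / 2) •
        fromBlocks
          (fromBlocks ((1 + c ^ 2 / g.det) • g) (((1 + c ^ 2 / g.det) * A + c / g.det) • g)
            (((1 + c ^ 2 / g.det) * A + c / g.det) • g)
            (((1 + c ^ 2 / g.det) * A ^ 2 + 2 * A * (c / g.det) + 1 / g.det) • g))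
          0 0 g8 := by
  rw [UOmega, MC, ← fromBlocks_shear_transpose_mul_mul]
  simp only [fromBlocks_transpose, transpose_one, transpose_zero, Matrix.smul_mul,
    Matrix.mul_smul, fromBlocks_multiply, Matrix.one_mul, Matrix.mul_one, Matrix.zero_mul,
    Matrix.mul_zero, add_zero, zero_add]

lemma MC_inv_sq_smul_smul (g : Matrix (Fin 3) (Fin 3) ℝ) (g8 : Matrix (Fin 8) (Fin 8) ℝ)
    (c : ℝ) {t : ℝ} (ht : 0 < t) :
    MC ((t ^ 2)⁻¹ • g) (t • g8) c =
      |g.det * g8.det| ^ (-(1 : ℝ) / 2) •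
        fromBlocks
          (fromBlocks (((t ^ 3)⁻¹ + c ^ 2 * t ^ 3 / g.det) • g) ((c * t ^ 3 / g.det) • g)
            ((c * t ^ 3 / g.det) • g) ((t ^ 3 / g.det) • g))
          0 0 g8 := by
  have hprefactor : |((t ^ 2)⁻¹ • g).det * (t • g8).det| ^ (-(1 : ℝ) / 2) =
      t⁻¹ * |g.det * g8.det| ^ (-(1 : ℝ) / 2) := by
    have : ((t ^ 2)⁻¹ • g).det * (t • g8).det = t ^ 2 * (g.det * g8.det) := by
      simp only [det_smul, Fintype.card_fin]
      field_simp
    rw [this, abs_mul, abs_of_pos (by positivity), Real.mul_rpow (by positivity) (abs_nonneg _),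
      ← Real.rpow_natCast, ← Real.rpow_mul ht.le]
    norm_num [Real.rpow_neg_one]
  rw [MC, hprefactor, mul_smul, smul_comm]
  congr 1
  simp only [fromBlocks_smul, smul_zero, smul_smul, det_smul, Fintype.card_fin,
    inv_mul_cancel₀ ht.ne', one_smul]
  congr 3 <;> field_simp

lemma omegaShift_coeff_eqs {K : Type*} [Field K] {D c A f : K} (hD : D ≠ 0) (hf : f ≠ 0)
    (hf_def : f = (1 + A * c) ^ 2 - A ^ 2 * (-D)) :
    f⁻¹ + ((c * (1 + A * c) - A * (-D)) / f) ^ 2 * f / D = 1 + c ^ 2 / D ∧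
      (c * (1 + A * c) - A * (-D)) / f * f / D = (1 + c ^ 2 / D) * A + c / D ∧
      f / D = (1 + c ^ 2 / D) * A ^ 2 + 2 * A * (c / D) + 1 / D := by
  refine ⟨?_, ?_, ?_⟩ <;> field_simp <;> subst hf_def <;> ring

theorem stmt_11_general (g : Matrix (Fin 3) (Fin 3) ℝ) (g8 : Matrix (Fin 8) (Fin 8) ℝ)
    (hg : Lorentzian3 g) (c A : ℝ)
    (hf : 0 < (1 + A * c) ^ 2 - A ^ 2 * (-g.det)) :
    (UOmega A)ᵀ * MC g g8 c * UOmega A =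
      MC (((1 + A * c) ^ 2 - A ^ 2 * (-g.det)) ^ (-(2 : ℝ) / 3) • g)
        (((1 + A * c) ^ 2 - A ^ 2 * (-g.det)) ^ ((1 : ℝ) / 3) • g8)
        ((c * (1 + A * c) - A * (-g.det)) / ((1 + A * c) ^ 2 - A ^ 2 * (-g.det))) := by
  set f := (1 + A * c) ^ 2 - A ^ 2 * (-g.det) with hf_def
  set t := f ^ ((1 : ℝ) / 3)
  have ht : 0 < t := Real.rpow_pos_of_pos hf _
  have ht3 : t ^ 3 = f := by
    rw [← Real.rpow_natCast, ← Real.rpow_mul hf.le]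
    norm_num
  have ht2 : f ^ (-(2 : ℝ) / 3) = (t ^ 2)⁻¹ := by
    rw [← Real.rpow_natCast, ← Real.rpow_mul hf.le, ← Real.rpow_neg hf.le]
    norm_num
  have hD : g.det ≠ 0 := hg.det_neg.ne
  rw [ht2, transpose_UOmega_mul_MC_mul_UOmega, MC_inv_sq_smul_smul _ _ _ ht, ht3]
  obtain ⟨h11, h12, h22⟩ := omegaShift_coeff_eqs hD hf.ne' hf_def
  rw [h11, h12, h22]

/-- Timelike Ω-shift when the dual background is still describable by a metric and 3-form:
for Lorentzian g, positive-definite g8 and f := (1+A·c)² − A²·|g| > 0 (|g| = −det g),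
U_Ω(A)ᵀ·M_C(g,g8,c)·U_Ω(A) = M_C(f^(−2/3)·g, f^(1/3)·g8, (c·(1+A·c) − A·|g|)/f). -/
theorem stmt_11 (g : Matrix (Fin 3) (Fin 3) ℝ) (g8 : Matrix (Fin 8) (Fin 8) ℝ)
    (hg : Lorentzian3 g) (hg8 : g8.PosDef) (c A : ℝ)
    (hf : 0 < (1 + A * c) ^ 2 - A ^ 2 * (-g.det)) :
    (UOmega A)ᵀ * MC g g8 c * UOmega A =
      MC (((1 + A * c) ^ 2 - A ^ 2 * (-g.det)) ^ (-(2 : ℝ) / 3) • g)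
        (((1 + A * c) ^ 2 - A ^ 2 * (-g.det)) ^ ((1 : ℝ) / 3) • g8)
        ((c * (1 + A * c) - A * (-g.det)) / ((1 + A * c) ^ 2 - A ^ 2 * (-g.det))) :=
  stmt_11_general g g8 hg c A hf
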